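/- arXiv:2310.15438 — 7 statements merged into one kernel-verified Lean document; each statement's English description precedes it below -/
import Mathlib

section
/- There exists N ∈ ℕ such that for all n ≥ N and all integers m with 2 ≤ m ≤ n−1, one has ℓ_max ≥ (1/2)·n^{3/4}. -/
open scoped Classical

/-- `‖z‖ = min { |a| + |b|·√n : a, b ∈ ℤ, z ≡ a + b·m (mod 2n−m+1) }`. -/
noncomputable def knorm (n m : ℕ) (z : ℤ) : ℝ :=
  sInf {r : ℝ | ∃ a b : ℤ,
    z ≡ a + b * m [ZMOD ((2 * n - m + 1 : ℕ) : ℤ)] ∧ r = |a| + |b| * Real.sqrt n}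
/-- `ℓ_max = max over ω ∈ {1,…,2n−m} of ‖ω‖`. -/
noncomputable def lmax (n m : ℕ) : ℝ :=
  sSup {r : ℝ | ∃ ω : ℕ, 1 ≤ ω ∧ ω ≤ 2 * n - m ∧ r = knorm n m (ω : ℤ)}

lemma knorm_set_nonempty (n m : ℕ) (z : ℤ) :
    {r : ℝ | ∃ a b : ℤ,
      z ≡ a + b * m [ZMOD ((2 * n - m + 1 : ℕ) : ℤ)] ∧ r = |a| + |b| * Real.sqrt n}.Nonempty :=
  ⟨|(z:ℝ)|, z, 0, by simp [Int.ModEq.refl], by simp⟩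

lemma knorm_le (n m : ℕ) (z a b : ℤ)
    (h : z ≡ a + b * m [ZMOD ((2 * n - m + 1 : ℕ) : ℤ)]) :
    knorm n m z ≤ |(a:ℝ)| + |(b:ℝ)| * Real.sqrt n := by
  apply csInf_le
  · refine ⟨0, ?_⟩
    rintro r ⟨a', b', _, rfl⟩
    positivity
  · exact ⟨a, b, h, by push_cast; ring⟩

lemma exists_of_knorm_lt (n m : ℕ) (z : ℤ) (L : ℝ) (h : knorm n m z < L) :
    ∃ a b : ℤ, z ≡ a + b * m [ZMOD ((2 * n - m + 1 : ℕ) : ℤ)] ∧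
      |(a:ℝ)| + |(b:ℝ)| * Real.sqrt n < L := by
  obtain ⟨r, ⟨a, b, hc, rfl⟩, hrL⟩ := exists_lt_of_csInf_lt (knorm_set_nonempty n m z) h
  exact ⟨a, b, hc, by push_cast at hrL ⊢; linarith⟩

lemma knorm_le_abs (n m : ℕ) (z : ℤ) : knorm n m z ≤ |(z:ℝ)| := by
  have := knorm_le n m z z 0 (by simp [Int.ModEq.refl])
  simpa using this

lemma sum_abs_Icc (B : ℕ) :
    ∑ b ∈ Finset.Icc (-(B:ℤ)) (B:ℤ), |b| = (B:ℤ) * (B + 1) := by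
  induction B with
  | zero => simp
  | succ B ih =>
    have hins : Finset.Icc (-(B+1:ℕ):ℤ) ((B+1:ℕ):ℤ) =
        insert (-(B+1:ℕ):ℤ) (insert ((B+1:ℕ):ℤ) (Finset.Icc (-(B:ℕ):ℤ) (B:ℤ))) := by
      ext x
      simp only [Finset.mem_Icc, Finset.mem_insert]
      push_cast
      omega
    rw [hins, Finset.sum_insert, Finset.sum_insert, ih, abs_neg, Int.abs_natCast]
    · push_cast; ring
    · simp only [Finset.mem_Icc]; push_cast; omega
    · simp only [Finset.mem_insert, Finset.mem_Icc]; push_cast; omega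

lemma diamond_card (M s B : ℕ) (hB : (B:ℕ) * s ≤ M) :
    (((Finset.Icc (-(B:ℤ)) (B:ℤ)).biUnion (fun b =>
      (Finset.Icc (-((M:ℤ) - |b| * s)) ((M:ℤ) - |b| * s)).image (fun a => (a, b)))).card : ℤ)
    = (2*(B:ℤ)+1) * (2*(M:ℤ)+1) - 2*(s:ℤ)*((B:ℤ)*((B:ℤ)+1)) := by
  have hdisj : ∀ x ∈ Finset.Icc (-(B:ℤ)) (B:ℤ), ∀ y ∈ Finset.Icc (-(B:ℤ)) (B:ℤ), x ≠ y →
      Disjoint ((Finset.Icc (-((M:ℤ) - |x| * s)) ((M:ℤ) - |x| * s)).image (fun a => (a, x)))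
        ((Finset.Icc (-((M:ℤ) - |y| * s)) ((M:ℤ) - |y| * s)).image (fun a => (a, y))) := by
    intro x _ y _ hxy
    simp only [Finset.disjoint_left, Finset.mem_image]
    rintro p ⟨a, _, rfl⟩ ⟨a', _, h⟩
    exact hxy ((congrArg Prod.snd h).symm)
  have key : ∀ b ∈ Finset.Icc (-(B:ℤ)) (B:ℤ),
      (((Finset.Icc (-((M:ℤ) - |b| * s)) ((M:ℤ) - |b| * s)).image (fun a => (a, b))).card : ℤ)
      = 2*((M:ℤ) - |b| * s) + 1 := by
    intro b hb
    rw [Finset.card_image_of_injective _ (fun x y h => congrArg Prod.fst h)]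
    have hbs : |b| * (s:ℤ) ≤ (M:ℤ) := by
      simp only [Finset.mem_Icc] at hb
      have h1 : |b| ≤ (B:ℤ) := abs_le.mpr hb
      calc |b| * (s:ℤ) ≤ (B:ℤ) * s := mul_le_mul_of_nonneg_right h1 (by positivity)
        _ ≤ (M:ℤ) := by exact_mod_cast hB
    have hle : -((M:ℤ) - |b| * s) ≤ ((M:ℤ) - |b| * s) + 1 := by linarith
    rw [Int.card_Icc_of_le _ _ hle]
    ring
  rw [Finset.card_biUnion hdisj]
  push_cast
  rw [Finset.sum_congr rfl key]
  have : ∀ b ∈ Finset.Icc (-(B:ℤ)) (B:ℤ),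
      2*((M:ℤ) - |b| * s) + 1 = (2*(M:ℤ)+1) - 2*(s:ℤ) * |b| := fun b _ => by ring
  rw [Finset.sum_congr rfl this, Finset.sum_sub_distrib, Finset.sum_const, ← Finset.mul_sum, sum_abs_Icc, Int.card_Icc, nsmul_eq_mul]
  have h2 : (((B:ℤ) + 1 - -(B:ℤ)).toNat : ℤ) = 2*(B:ℤ)+1 := by omega
  rw [h2]

lemma poly_bound (x : ℝ) (hx : 10 ≤ x) :
    2*(x^(3:ℕ)/2)*(x^(3:ℕ)/2) + 2*(x^(3:ℕ)/2)*(x^(2:ℕ)) ≤ x^(4:ℕ)*(x^(2:ℕ) - 1) := by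
  have hx0 : (0:ℝ) < x := by linarith
  nlinarith [pow_nonneg hx0.le 5, pow_nonneg hx0.le 4,
    mul_le_mul_of_nonneg_left hx (pow_nonneg hx0.le 5)]


/-- There is `N` such that for all `n ≥ N` and all `m` with
`2 ≤ m ≤ n−1`, one has `ℓ_max ≥ (1/2)·n^{3/4}`. -/
theorem lmax_lower_bound :
    ∃ N : ℕ, ∀ n : ℕ, N ≤ n → ∀ m : ℕ, 2 ≤ m → m ≤ n - 1 →
      (1 / 2 : ℝ) * (n : ℝ) ^ ((3 : ℝ) / 4) ≤ lmax n m := by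
  refine ⟨10000, fun n hn m hm2 hm1 => ?_⟩
  by_contra hcon
  push_neg at hcon
  have hn2 : (3:ℕ) ≤ n := by omega
  have hm1' : m + 1 ≤ n := by omega
  set L : ℝ := (1 / 2 : ℝ) * (n : ℝ) ^ ((3 : ℝ) / 4) with hLdef
  have hnR : (0:ℝ) < n := by positivity
  have hLpos : 0 < L := by positivity
  set K : ℕ := 2 * n - m + 1 with hK
  have hKn : n + 2 ≤ K := by omega
  -- every relevant knorm is < L
  have hbdd : BddAbove {r : ℝ | ∃ ω : ℕ, 1 ≤ ω ∧ ω ≤ 2 * n - m ∧ r = knorm n m (ω : ℤ)} := by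
    refine ⟨(2*n : ℝ), ?_⟩
    rintro r ⟨ω, hω1, hω2, rfl⟩
    have h2 : ((ω:ℤ):ℝ) ≤ 2*n := by
      have : (ω:ℕ) ≤ 2*n := by omega
      push_cast
      exact_mod_cast this
    calc knorm n m (ω:ℤ) ≤ |((ω:ℤ):ℝ)| := knorm_le_abs n m ω
      _ ≤ 2*(n:ℝ) := by rw [abs_of_nonneg (by positivity)]; exact h2
  have hsmall : ∀ ω : ℕ, 1 ≤ ω → ω ≤ 2 * n - m → knorm n m (ω:ℤ) < L := by
    intro ω h1 h2
    calc knorm n m (ω:ℤ) ≤ lmax n m := le_csSup hbdd ⟨ω, h1, h2, rfl⟩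
      _ < L := hcon
  -- integer parameters
  set s : ℕ := Nat.sqrt n with hs
  set M : ℕ := ⌊L⌋₊ with hM
  set B : ℕ := M / s with hB
  have hs1 : 1 ≤ s := by
    have := Nat.sqrt_pos.mpr (show 0 < n by omega)
    omega
  have hsle : (s:ℝ) ≤ Real.sqrt n := Real.nat_sqrt_le_real_sqrt
  -- choose representatives
  have hex : ∀ ω : ℕ, ∃ p : ℤ × ℤ,  ω < K →
      ((ω:ℤ) ≡ p.1 + p.2 * m [ZMOD ((2 * n - m + 1 : ℕ) : ℤ)] ∧
        p.1.natAbs + p.2.natAbs * s ≤ M) := by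
    intro ω
    rcases Nat.eq_zero_or_pos ω with h0 | h1
    · refine ⟨(0,0), fun _ => ⟨?_, by simp⟩⟩
      subst h0
      simpa using (Int.ModEq.refl (0:ℤ))
    · by_cases hω : ω < K
      · obtain ⟨a, b, hc, hlt⟩ := exists_of_knorm_lt n m ω L (hsmall ω h1 (by omega))
        refine ⟨(a, b), fun _ => ⟨hc, ?_⟩⟩
        apply Nat.le_floor
        have hcast : ((a.natAbs + b.natAbs * s : ℕ) : ℝ) ≤ |(a:ℝ)| + |(b:ℝ)| * Real.sqrt n := by
          push_cast [Nat.cast_natAbs]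
          have hb0 : (0:ℝ) ≤ |(b:ℝ)| := abs_nonneg _
          nlinarith [hsle, Real.sqrt_nonneg (n:ℝ)]
        linarith
      · exact ⟨(0,0), fun h => absurd h hω⟩
  choose f hf using hex
  set T : Finset (ℤ × ℤ) := (Finset.Icc (-(B:ℤ)) (B:ℤ)).biUnion (fun b =>
      (Finset.Icc (-((M:ℤ) - |b| * s)) ((M:ℤ) - |b| * s)).image (fun a => (a, b))) with hT
  have hBs : B * s ≤ M := Nat.div_mul_le_self M s
  have hmaps : ∀ ω ∈ Finset.range K, f ω ∈ T := by
    intro ω hω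
    rw [Finset.mem_range] at hω
    obtain ⟨hc, hn1⟩ := hf ω hω
    obtain ⟨t, ht⟩ : ∃ t : ℕ, (f ω).2.natAbs * s = t := ⟨_, rfl⟩
    rw [ht] at hn1
    rw [hT, Finset.mem_biUnion]
    have hb2 : (f ω).2.natAbs ≤ B := by
      rw [hB]
      exact (Nat.le_div_iff_mul_le (show 0 < s by omega)).mpr
        (by rw [ht]; exact le_trans (Nat.le_add_left _ _) hn1)
    refine ⟨(f ω).2, ?_, ?_⟩
    · rw [Finset.mem_Icc]
      constructor <;> omega
    · rw [Finset.mem_image]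
      refine ⟨(f ω).1, ?_, Prod.mk.eta⟩
      rw [Finset.mem_Icc]
      have hcast : |(f ω).2| * (s:ℤ) = (t:ℤ) := by
        rw [Int.abs_eq_natAbs, ← ht]
        push_cast
        ring
      rw [hcast]
      constructor <;> omega
  have hinj : Set.InjOn f (Finset.range K) := by
    intro ω₁ h1 ω₂ h2 heq
    simp only [Finset.coe_range, Set.mem_Iio] at h1 h2
    obtain ⟨hc1, _⟩ := hf ω₁ h1
    obtain ⟨hc2, _⟩ := hf ω₂ h2
    rw [heq] at hc1
    have hmod : ((ω₁:ℤ)) % ((2 * n - m + 1 : ℕ) : ℤ) = ((ω₂:ℤ)) % ((2 * n - m + 1 : ℕ) : ℤ) :=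
      hc1.trans hc2.symm
    have e1 : ((ω₁:ℤ)) % ((2 * n - m + 1 : ℕ) : ℤ) = (ω₁:ℤ) :=
      Int.emod_eq_of_lt (by positivity) (by exact_mod_cast h1)
    have e2 : ((ω₂:ℤ)) % ((2 * n - m + 1 : ℕ) : ℤ) = (ω₂:ℤ) :=
      Int.emod_eq_of_lt (by positivity) (by exact_mod_cast h2)
    have : (ω₁:ℤ) = (ω₂:ℤ) := by rw [← e1, hmod, e2]
    exact_mod_cast this
  have hcard : K ≤ T.card := by
    calc K = (Finset.range K).card := (Finset.card_range K).symm
      _ ≤ T.card := Finset.card_le_card_of_injOn f hmaps hinj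
  have hTcard : (T.card : ℤ) = (2*(B:ℤ)+1) * (2*(M:ℤ)+1) - 2*(s:ℤ)*((B:ℤ)*((B:ℤ)+1)) :=
    diamond_card M s B hBs
  have hsB1 : (M:ℤ) + 1 ≤ (s:ℤ) * ((B:ℤ) + 1) := by
    have h1 : M % s < s := Nat.mod_lt _ (by omega)
    have h2 : s * B + M % s = M := by rw [hB]; exact Nat.div_add_mod M s
    have h3 : M + 1 ≤ s * (B + 1) := by
      have e : s * (B+1) = s * B + s := by ring
      rw [e]; omega
    exact_mod_cast h3
  have hfinal : (K:ℤ) ≤ 2 * (M:ℤ) * ((B:ℤ) + 1) + 1 := by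
    calc (K:ℤ) ≤ (T.card : ℤ) := by exact_mod_cast hcard
      _ = (2*(B:ℤ)+1) * (2*(M:ℤ)+1) - 2*(s:ℤ)*((B:ℤ)*((B:ℤ)+1)) := hTcard
      _ ≤ 2 * (M:ℤ) * ((B:ℤ) + 1) + 1 := by
          nlinarith [mul_le_mul_of_nonneg_left hsB1 (show (0:ℤ) ≤ 2*(B:ℤ) by positivity)]
  have hn1 : n + 1 ≤ 2 * M * (B + 1) := by
    have h4 : (n:ℤ) + 2 ≤ 2 * (M:ℤ) * ((B:ℤ) + 1) + 1 :=
      le_trans (by exact_mod_cast hKn) hfinal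
    have h5 : (n:ℤ) + 1 ≤ 2 * (M:ℤ) * ((B:ℤ) + 1) := by linarith
    exact_mod_cast h5
  -- real estimate: 2M(B+1) ≤ n, contradiction
  set x : ℝ := (n:ℝ) ^ ((1:ℝ)/4) with hx
  have hx0 : 0 < x := by positivity
  have hx4 : x ^ (4:ℕ) = (n:ℝ) := by
    rw [hx, ← Real.rpow_natCast ((n:ℝ) ^ ((1:ℝ)/4)) 4, ← Real.rpow_mul hnR.le]
    norm_num
  have hx3 : (n:ℝ) ^ ((3:ℝ)/4) = x ^ (3:ℕ) := by
    rw [hx, ← Real.rpow_natCast ((n:ℝ) ^ ((1:ℝ)/4)) 3, ← Real.rpow_mul hnR.le]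
    norm_num
  have hx2 : Real.sqrt (n:ℝ) = x ^ (2:ℕ) := by
    rw [Real.sqrt_eq_rpow, hx, ← Real.rpow_natCast ((n:ℝ) ^ ((1:ℝ)/4)) 2, ← Real.rpow_mul hnR.le]
    norm_num
  have hx10 : (10:ℝ) ≤ x := by
    have h1 : ((10000:ℝ)) ≤ (n:ℝ) := by exact_mod_cast hn
    have h2 : ((10000:ℝ)) ^ ((1:ℝ)/4) ≤ (n:ℝ) ^ ((1:ℝ)/4) :=
      Real.rpow_le_rpow (by norm_num) h1 (by norm_num)
    have h3 : ((10000:ℝ)) ^ ((1:ℝ)/4) = 10 := by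
      rw [show ((10000:ℝ)) = (10:ℝ) ^ (4:ℕ) by norm_num,
        ← Real.rpow_natCast (10:ℝ) 4, ← Real.rpow_mul (by norm_num)]
      norm_num
    rw [← h3]; exact h2
  have hMle : (M:ℝ) ≤ x ^ (3:ℕ) / 2 := by
    have := Nat.floor_le hLpos.le
    rw [← hM] at this
    rw [hLdef, hx3] at this
    linarith
  have hsgeR : x ^ (2:ℕ) - 1 ≤ (s:ℝ) := by
    have := Real.real_sqrt_le_nat_sqrt_succ (a := n)
    rw [hx2] at this
    rw [hs]
    linarith
  have hsleR : (s:ℝ) ≤ x ^ (2:ℕ) := by rw [← hx2]; exact hsle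
  have hBsR : (B:ℝ) * s ≤ (M:ℝ) := by exact_mod_cast hBs
  have hspos : (0:ℝ) < s := by
    have : (1:ℝ) ≤ s := by exact_mod_cast hs1
    linarith
  have hMB : (2 * M * (B + 1) : ℕ) ≤ n := by
    have key2 : 2*(M:ℝ)*((B:ℝ)+1) * s ≤ (n:ℝ) * s := by
      have hM0 : (0:ℝ) ≤ M := by positivity
      have hB0 : (0:ℝ) ≤ B := by positivity
      have e2 : 2*(M:ℝ)*((B:ℝ)*s) ≤ 2*(M:ℝ)*(M:ℝ) :=
        mul_le_mul_of_nonneg_left hBsR (by positivity)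
      have e3 : (M:ℝ)*(M:ℝ) ≤ (x^(3:ℕ)/2)*(x^(3:ℕ)/2) := mul_self_le_mul_self hM0 hMle
      have e4 : (M:ℝ)*(s:ℝ) ≤ (x^(3:ℕ)/2)*(x^(2:ℕ)) :=
        mul_le_mul hMle hsleR (by positivity) (by positivity)
      have e5 : x^(4:ℕ)*(x^(2:ℕ) - 1) ≤ (n:ℝ)*s := by
        rw [← hx4]
        exact mul_le_mul_of_nonneg_left hsgeR (by positivity)
      have e6 := poly_bound x hx10
      have expand : 2*(M:ℝ)*((B:ℝ)+1)*s = 2*((M:ℝ)*((B:ℝ)*s)) + 2*((M:ℝ)*s) := by ring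
      linarith [e2, e3, e4, e5, e6]
    have key3 : 2*(M:ℝ)*((B:ℝ)+1) ≤ (n:ℝ) := le_of_mul_le_mul_right key2 hspos
    exact_mod_cast key3
  omega
end

section
/- Let φ = (√5 − 1)/2 be the inverse golden ratio. There exists N ∈ ℕ such that for all n ≥ N, taking m = ⌊φ·n⌋, every integer x ∈ {1,…,2n−m} satisfies ‖x‖ ≤ 6·n^{3/4}; in particular ℓ_max ≤ 6·n^{3/4}. -/
open scoped Classical

/-- The inverse golden ratio `φ = (√5 − 1)/2`. -/
noncomputable def invGolden : ℝ := (Real.sqrt 5 - 1) / 2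
lemma sqrt5_sq : Real.sqrt 5 ^ 2 = 5 := Real.sq_sqrt (by norm_num)

lemma sqrt5_gt : 2 < Real.sqrt 5 := by
  nlinarith [sqrt5_sq, Real.sqrt_nonneg 5]

lemma sqrt5_lt : Real.sqrt 5 < 9/4 := by
  nlinarith [sqrt5_sq, Real.sqrt_nonneg 5]

lemma phi_pos : 0 < invGolden := by
  unfold invGolden; linarith [sqrt5_gt]

lemma phi_lt_one : invGolden < 1 := by
  unfold invGolden; linarith [sqrt5_lt]

lemma phi_sq : invGolden ^ 2 = 1 - invGolden := by
  unfold invGolden; nlinarith [sqrt5_sq]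

lemma fib_phi (j : ℕ) :
    (Nat.fib (j+1) : ℝ) * invGolden - (Nat.fib j : ℝ) = (-1)^j * invGolden^(j+1) := by
  induction j with
  | zero => simp
  | succ j ih =>
    have h2 : (Nat.fib (j+2) : ℝ) = Nat.fib j + Nat.fib (j+1) := by
      rw [Nat.fib_add_two]; push_cast; ring
    rw [h2]
    have := phi_sq
    linear_combination (-invGolden) * ih + (Nat.fib (j+1) : ℝ) * this

lemma phi_fib_le (j : ℕ) : invGolden ^ j * (Nat.fib (j+2) : ℝ) ≤ 2 := by
  induction j using Nat.twoStepInduction with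
  | zero => simp
  | one =>
    have := phi_lt_one
    have h3 : (Nat.fib 3 : ℝ) = 2 := by norm_num [Nat.fib]
    rw [h3]; nlinarith [phi_pos]
  | more j h1 h2 =>
    have h4 : (Nat.fib (j+4) : ℝ) = Nat.fib (j+2) + Nat.fib (j+3) := by
      rw [show j+4 = (j+2)+2 from rfl, Nat.fib_add_two]; push_cast; ring
    have key : invGolden^(j+2) * (Nat.fib (j+4) : ℝ)
        = invGolden^2 * (invGolden^j * (Nat.fib (j+2):ℝ))
          + invGolden * (invGolden^(j+1) * (Nat.fib (j+3):ℝ)) := by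
      rw [h4]; ring
    have hp := phi_pos
    have hps := phi_sq
    nlinarith [mul_le_mul_of_nonneg_left h1 (sq_nonneg invGolden),
      mul_le_mul_of_nonneg_left h2 hp.le]

lemma cassini (j : ℕ) :
    (Nat.fib j : ℤ) * Nat.fib (j+2) - (Nat.fib (j+1) : ℤ)^2 = (-1)^(j+1) := by
  induction j with
  | zero => simp
  | succ j ih =>
    have h2 : (Nat.fib (j+2) : ℤ) = Nat.fib j + Nat.fib (j+1) := by
      rw [Nat.fib_add_two]; push_cast; ring
    have h3 : (Nat.fib (j+3) : ℤ) = Nat.fib (j+1) + Nat.fib (j+2) := by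
      rw [show j+3 = (j+1)+2 from rfl, Nat.fib_add_two]; push_cast; ring
    rw [h3, h2]
    linear_combination (-1 : ℤ) * ih + (Nat.fib j : ℤ) * h2

lemma abs_comb (X Y Z : ℝ) : |2*(X+Y)+Z| ≤ 2*|X| + 2*|Y| + |Z| := by
  calc |2*(X+Y)+Z| ≤ |2*(X+Y)| + |Z| := abs_add_le _ _
    _ = 2*|X+Y| + |Z| := by rw [abs_mul, abs_two]
    _ ≤ 2*(|X|+|Y|) + |Z| := by linarith [abs_add_le X Y]
    _ = 2*|X| + 2*|Y| + |Z| := by ring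

set_option maxHeartbeats 2000000 in
lemma key (n m j : ℕ) (x : ℤ)
    (hn : 100 ≤ n)
    (hm1 : (m:ℝ) ≤ invGolden * n) (hm2 : invGolden * n < m + 1)
    (hmn : m ≤ n)
    (hfu : Nat.fib (j+1) ^ 4 < n) (hfl : n ≤ Nat.fib (j+2) ^ 4) :
    ∃ a b : ℤ, x ≡ a + b * m [ZMOD (2*(n:ℤ) + 1 - m)] ∧
      |(a:ℝ)| + |(b:ℝ)| * Real.sqrt n ≤ 6 * (n : ℝ) ^ ((3 : ℝ) / 4) := by
  have hφ := phi_pos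
  have hφ1 := phi_lt_one
  -- integer data
  set M : ℤ := 2*(n:ℤ) + 1 - m with hM
  set A1 : ℤ := (Nat.fib (j+1) : ℤ) * (2*n+1) - 2 * Nat.fib (j+2) * m with hA1
  set B1 : ℤ := 2 * (Nat.fib (j+2) : ℤ) - Nat.fib (j+1) with hB1
  set A2 : ℤ := (Nat.fib (j+2) : ℤ) * (2*n+1) - 2 * Nat.fib (j+3) * m with hA2
  set B2 : ℤ := 2 * (Nat.fib (j+3) : ℤ) - Nat.fib (j+2) with hB2
  have hrec3 : (Nat.fib (j+3) : ℤ) = Nat.fib (j+1) + Nat.fib (j+2) := by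
    rw [show j+3 = (j+1)+2 from rfl, Nat.fib_add_two]; push_cast; ring
  have hu1 : A1 + B1 * m = (Nat.fib (j+1) : ℤ) * M := by rw [hA1, hB1, hM]; ring
  have hu2 : A2 + B2 * m = (Nat.fib (j+2) : ℤ) * M := by rw [hA2, hB2, hM]; ring
  have hDval : A1 * B2 - A2 * B1
      = 2 * ((Nat.fib (j+1) : ℤ) * Nat.fib (j+3) - (Nat.fib (j+2):ℤ)^2) * M := by
    rw [hA1, hA2, hB1, hB2, hM]; ring
  have hMpos : 0 < M := by rw [hM]; omega
  have hDne : A1 * B2 - A2 * B1 ≠ 0 := by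
    rw [hDval, cassini (j+1)]
    rcases Nat.even_or_odd (j+2) with h | h
    · rw [h.neg_one_pow]; positivity
    · rw [h.neg_one_pow]; intro hc; nlinarith
  have hDRne : ((A1 * B2 - A2 * B1 : ℤ) : ℝ) ≠ 0 := by exact_mod_cast hDne
  -- rounding
  set s : ℤ := round ((x:ℝ) * B2 / ((A1 * B2 - A2 * B1 : ℤ) : ℝ)) with hs
  set t : ℤ := round (-((x:ℝ) * B1) / ((A1 * B2 - A2 * B1 : ℤ) : ℝ)) with ht
  refine ⟨x - s*A1 - t*A2, -(s*B1 + t*B2), ?_, ?_⟩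
  · rw [Int.modEq_iff_dvd]
    refine ⟨-(s * Nat.fib (j+1) + t * Nat.fib (j+2)), ?_⟩
    linear_combination (-s) * hu1 + (-t) * hu2
  · -- analytic estimates
    have hsub1 : |(x:ℝ) * B2 / ((A1 * B2 - A2 * B1 : ℤ) : ℝ) - s| ≤ 1/2 := by
      rw [hs]; exact abs_sub_round _
    have hsub2 : |-((x:ℝ) * B1) / ((A1 * B2 - A2 * B1 : ℤ) : ℝ) - t| ≤ 1/2 := by
      rw [ht]; exact abs_sub_round _
    push_cast at hsub1 hsub2 hDRne
    have haeq : ((x - s*A1 - t*A2 : ℤ) : ℝ)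
        = ((x:ℝ) * B2 / ((A1:ℝ)*B2 - (A2:ℝ)*B1) - s) * A1
          + (-((x:ℝ) * B1) / ((A1:ℝ)*B2 - (A2:ℝ)*B1) - t) * A2 := by
      push_cast
      field_simp
      ring
    have hbeq : ((-(s*B1 + t*B2) : ℤ) : ℝ)
        = ((x:ℝ) * B2 / ((A1:ℝ)*B2 - (A2:ℝ)*B1) - s) * B1
          + (-((x:ℝ) * B1) / ((A1:ℝ)*B2 - (A2:ℝ)*B1) - t) * B2 := by
      push_cast
      field_simp
      ring
    have habs : |((x - s*A1 - t*A2 : ℤ) : ℝ)| ≤ (|(A1:ℝ)| + |(A2:ℝ)|) / 2 := by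
      rw [haeq]
      refine le_trans (abs_add_le _ _) ?_
      rw [abs_mul, abs_mul]
      have e1 := mul_le_mul_of_nonneg_right hsub1 (abs_nonneg (A1:ℝ))
      have e2 := mul_le_mul_of_nonneg_right hsub2 (abs_nonneg (A2:ℝ))
      linarith
    have hbabs : |((-(s*B1 + t*B2) : ℤ) : ℝ)| ≤ (|(B1:ℝ)| + |(B2:ℝ)|) / 2 := by
      rw [hbeq]
      refine le_trans (abs_add_le _ _) ?_
      rw [abs_mul, abs_mul]
      have e1 := mul_le_mul_of_nonneg_right hsub1 (abs_nonneg (B1:ℝ))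
      have e2 := mul_le_mul_of_nonneg_right hsub2 (abs_nonneg (B2:ℝ))
      linarith
    clear hsub1 hsub2 haeq hbeq hDRne hDne hDval hu1 hu2 hrec3 hs ht hM hMpos
    clear_value s t A1 A2 B1 B2 M
    -- fib recurrences over ℝ
    have hfib2R : (Nat.fib (j+2) : ℝ) = Nat.fib j + Nat.fib (j+1) := by
      rw [Nat.fib_add_two]; push_cast; ring
    have hfib3R : (Nat.fib (j+3) : ℝ) = Nat.fib (j+1) + Nat.fib (j+2) := by
      rw [show j+3 = (j+1)+2 from rfl, Nat.fib_add_two]; push_cast; ring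
    have hfib4R : (Nat.fib (j+4) : ℝ) = Nat.fib (j+2) + Nat.fib (j+3) := by
      rw [show j+4 = (j+2)+2 from rfl, Nat.fib_add_two]; push_cast; ring
    -- the scale T = n^(1/4)
    have hn0R : (0:ℝ) < n := by
      have h : (0:ℕ) < n := by omega
      exact_mod_cast h
    set T : ℝ := (n:ℝ) ^ ((1:ℝ)/4) with hTdef
    have hT0 : 0 < T := Real.rpow_pos_of_pos hn0R _
    have hT4 : T^4 = n := by
      rw [hTdef, ← Real.rpow_natCast ((n:ℝ) ^ ((1:ℝ)/4)) 4, ← Real.rpow_mul hn0R.le]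
      norm_num
    have hT2 : T^2 = Real.sqrt n := by
      rw [hTdef, ← Real.rpow_natCast ((n:ℝ) ^ ((1:ℝ)/4)) 2, ← Real.rpow_mul hn0R.le,
        Real.sqrt_eq_rpow]
      norm_num
    have hT3 : T^3 = (n:ℝ) ^ ((3:ℝ)/4) := by
      rw [hTdef, ← Real.rpow_natCast ((n:ℝ) ^ ((1:ℝ)/4)) 3, ← Real.rpow_mul hn0R.le]
      norm_num
    have hT2ge : 10 ≤ T^2 := by
      rw [hT2]
      have h100 : (100:ℝ) ≤ (n:ℝ) := by exact_mod_cast hn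
      nlinarith [Real.sq_sqrt hn0R.le, Real.sqrt_nonneg (n:ℝ)]
    -- fib size bounds
    have hmono01 : (Nat.fib j : ℝ) ≤ (Nat.fib (j+1) : ℝ) := by
      exact_mod_cast Nat.fib_mono (by omega : j ≤ j+1)
    have hg1 : (Nat.fib (j+1) : ℝ) ≤ T := by
      have h4 : ((Nat.fib (j+1)) : ℝ)^4 < T^4 := by
        rw [hT4]; exact_mod_cast hfu
      exact (lt_of_pow_lt_pow_left₀ 4 hT0.le h4).le
    have hg2l : T ≤ (Nat.fib (j+2) : ℝ) := by
      refine le_of_pow_le_pow_left₀ (n := 4) (by norm_num) (Nat.cast_nonneg _) ?_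
      rw [hT4]; exact_mod_cast hfl
    have hg0 : (Nat.fib j : ℝ) ≤ T := le_trans hmono01 hg1
    have hg2u : (Nat.fib (j+2) : ℝ) ≤ 2*T := by rw [hfib2R]; linarith only [hg0, hg1]
    have hg3u : (Nat.fib (j+3) : ℝ) ≤ 3*T := by rw [hfib3R]; linarith only [hg1, hg2u]
    have hg1l : T/2 ≤ (Nat.fib (j+1) : ℝ) := by
      have h : (Nat.fib (j+2) : ℝ) ≤ 2 * Nat.fib (j+1) := by rw [hfib2R]; linarith only [hmono01]
      linarith only [h, hg2l]
    have hg4l : (5/2)*T ≤ (Nat.fib (j+4) : ℝ) := by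
      rw [hfib4R, hfib3R]; linarith only [hg2l, hg1l]
    -- phi power bounds
    have hpT2 : invGolden^(j+2) * T ≤ 4/5 := by
      have h1 : invGolden^(j+2) * ((5/2)*T) ≤ invGolden^(j+2) * (Nat.fib (j+4) : ℝ) :=
        mul_le_mul_of_nonneg_left hg4l (pow_nonneg hφ.le _)
      have h2 := phi_fib_le (j+2)
      linarith only [h1, h2]
    have hpT3 : invGolden^(j+3) * T ≤ 4/5 := by
      have h1 : invGolden^(j+3)*T = invGolden*(invGolden^(j+2)*T) := by ring
      have h2 : invGolden*(invGolden^(j+2)*T) ≤ 1*(invGolden^(j+2)*T) :=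
        mul_le_mul_of_nonneg_right hφ1.le (mul_nonneg (pow_nonneg hφ.le _) hT0.le)
      rw [h1]
      linarith only [h2, hpT2]
    have hnphi2 : (n:ℝ) * invGolden^(j+2) ≤ (4/5) * T^3 := by
      calc (n:ℝ)*invGolden^(j+2) = T^3*(invGolden^(j+2)*T) := by rw [← hT4]; ring
        _ ≤ T^3*(4/5) := mul_le_mul_of_nonneg_left hpT2 (by positivity)
        _ = (4/5)*T^3 := by ring
    have hnphi3 : (n:ℝ) * invGolden^(j+3) ≤ (4/5) * T^3 := by
      calc (n:ℝ)*invGolden^(j+3) = T^3*(invGolden^(j+3)*T) := by rw [← hT4]; ring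
        _ ≤ T^3*(4/5) := mul_le_mul_of_nonneg_left hpT3 (by positivity)
        _ = (4/5)*T^3 := by ring
    -- |A1|, |A2| bounds
    have hm3 : 0 ≤ invGolden * n - m := by linarith only [hm1]
    have hm4 : invGolden * n - m ≤ 1 := by linarith only [hm2]
    have hfibphi1 : |(Nat.fib (j+1):ℝ) - (Nat.fib (j+2):ℝ) * invGolden| = invGolden^(j+2) := by
      rw [abs_sub_comm, fib_phi (j+1), abs_mul, abs_pow, abs_neg, abs_one, one_pow, one_mul,
        abs_of_nonneg (pow_nonneg hφ.le _)]
    have hfibphi2 : |(Nat.fib (j+2):ℝ) - (Nat.fib (j+3):ℝ) * invGolden| = invGolden^(j+3) := by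
      rw [abs_sub_comm, fib_phi (j+2), abs_mul, abs_pow, abs_neg, abs_one, one_pow, one_mul,
        abs_of_nonneg (pow_nonneg hφ.le _)]
    have hA1abs : |(A1:ℝ)| ≤ 2*((n:ℝ)*invGolden^(j+2)) + 2*(Nat.fib (j+2):ℝ) + (Nat.fib (j+1):ℝ) := by
      have hA1R : (A1:ℝ) = 2*((n:ℝ)*((Nat.fib (j+1):ℝ) - (Nat.fib (j+2):ℝ)*invGolden)
          + (Nat.fib (j+2):ℝ)*(invGolden*n - m)) + (Nat.fib (j+1):ℝ) := by
        rw [hA1]; push_cast; ring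
      rw [hA1R]
      refine le_trans (abs_comb _ _ _) ?_
      have t1 : |(n:ℝ)*((Nat.fib (j+1):ℝ) - (Nat.fib (j+2):ℝ)*invGolden)|
          = (n:ℝ) * invGolden^(j+2) := by
        rw [abs_mul, abs_of_nonneg hn0R.le, hfibphi1]
      have t2 : |(Nat.fib (j+2):ℝ)*(invGolden*n - m)| ≤ (Nat.fib (j+2):ℝ) := by
        rw [abs_of_nonneg (mul_nonneg (Nat.cast_nonneg _) hm3)]
        nlinarith [hm4, hm3, (Nat.cast_nonneg (Nat.fib (j+2)) : (0:ℝ) ≤ Nat.fib (j+2))]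
      rw [t1, abs_of_nonneg (Nat.cast_nonneg (Nat.fib (j+1)) : (0:ℝ) ≤ Nat.fib (j+1))]
      linarith only [t2]
    have hA2abs : |(A2:ℝ)| ≤ 2*((n:ℝ)*invGolden^(j+3)) + 2*(Nat.fib (j+3):ℝ) + (Nat.fib (j+2):ℝ) := by
      have hA2R : (A2:ℝ) = 2*((n:ℝ)*((Nat.fib (j+2):ℝ) - (Nat.fib (j+3):ℝ)*invGolden)
          + (Nat.fib (j+3):ℝ)*(invGolden*n - m)) + (Nat.fib (j+2):ℝ) := by
        rw [hA2]; push_cast; ring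
      rw [hA2R]
      refine le_trans (abs_comb _ _ _) ?_
      have t1 : |(n:ℝ)*((Nat.fib (j+2):ℝ) - (Nat.fib (j+3):ℝ)*invGolden)|
          = (n:ℝ) * invGolden^(j+3) := by
        rw [abs_mul, abs_of_nonneg hn0R.le, hfibphi2]
      have t2 : |(Nat.fib (j+3):ℝ)*(invGolden*n - m)| ≤ (Nat.fib (j+3):ℝ) := by
        rw [abs_of_nonneg (mul_nonneg (Nat.cast_nonneg _) hm3)]
        nlinarith [hm4, hm3, (Nat.cast_nonneg (Nat.fib (j+3)) : (0:ℝ) ≤ Nat.fib (j+3))]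
      rw [t1, abs_of_nonneg (Nat.cast_nonneg (Nat.fib (j+2)) : (0:ℝ) ≤ Nat.fib (j+2))]
      linarith only [t2]
    -- B bounds
    have eB1 : (B1:ℝ) = 2*(Nat.fib (j+2):ℝ) - (Nat.fib (j+1):ℝ) := by rw [hB1]; push_cast; ring
    have eB2 : (B2:ℝ) = 2*(Nat.fib (j+3):ℝ) - (Nat.fib (j+2):ℝ) := by rw [hB2]; push_cast; ring
    have hmono12 : (Nat.fib (j+1) : ℝ) ≤ (Nat.fib (j+2) : ℝ) := by
      exact_mod_cast Nat.fib_mono (by omega : j+1 ≤ j+2)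
    have hmono23 : (Nat.fib (j+2) : ℝ) ≤ (Nat.fib (j+3) : ℝ) := by
      exact_mod_cast Nat.fib_mono (by omega : j+2 ≤ j+3)
    have hBpos1 : (0:ℝ) ≤ (B1:ℝ) := by rw [eB1]; linarith only [hmono12]
    have hBpos2 : (0:ℝ) ≤ (B2:ℝ) := by rw [eB2]; linarith only [hmono23]
    have hb72 : |((-(s*B1 + t*B2) : ℤ) : ℝ)| ≤ (7/2)*T := by
      refine hbabs.trans ?_
      rw [abs_of_nonneg hBpos1, abs_of_nonneg hBpos2, eB1, eB2, hfib3R, hfib2R]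
      linarith only [hg0, hg1]
    have ha' : |((x - s*A1 - t*A2 : ℤ) : ℝ)| ≤ (8/5)*T^3 + (13/2)*T := by
      refine habs.trans ?_
      linarith only [hA1abs, hA2abs, hnphi2, hnphi3, hg1, hg2u, hg3u, habs]
    -- final assembly
    rw [← hT3, ← hT2]
    have hbT : |((-(s*B1 + t*B2) : ℤ) : ℝ)| * T^2 ≤ (7/2)*T*T^2 :=
      mul_le_mul_of_nonneg_right hb72 (sq_nonneg T)
    have h10T : 0 ≤ T * (T^2 - 10) := mul_nonneg hT0.le (by linarith only [hT2ge])
    linarith only [ha', hbT, h10T, hT0]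

lemma n_le_fib (n : ℕ) : n ≤ Nat.fib (n+1) := by
  induction n with
  | zero => simp
  | succ n ih =>
    rcases Nat.eq_zero_or_pos n with h | h
    · subst h; decide
    · have h1 : 0 < Nat.fib n := Nat.fib_pos.mpr h
      rw [Nat.fib_add_two]
      omega

/-- There is `N` such that for all `n ≥ N`, with `m = ⌊φ·n⌋` (φ the
inverse golden ratio), every `x ∈ {1,…,2n−m}` has `‖x‖ ≤ 6·n^{3/4}`; in particular
`ℓ_max ≤ 6·n^{3/4}`. -/
theorem knorm_upper_bound_golden :
    ∃ N : ℕ, ∀ n : ℕ, N ≤ n → ∀ m : ℕ, m = Nat.floor (invGolden * n) →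
      (∀ x : ℕ, 1 ≤ x → x ≤ 2 * n - m →
        knorm n m (x : ℤ) ≤ 6 * (n : ℝ) ^ ((3 : ℝ) / 4)) ∧
      lmax n m ≤ 6 * (n : ℝ) ^ ((3 : ℝ) / 4) := by

  refine ⟨100, ?_⟩
  intro n hn m hm
  have hφ := phi_pos
  have hφ1 := phi_lt_one
  have hnn : (0:ℝ) ≤ invGolden * n := by positivity
  have hm1 : (m:ℝ) ≤ invGolden * n := by rw [hm]; exact Nat.floor_le hnn
  have hm2 : invGolden * n < m + 1 := by
    rw [hm]; exact Nat.lt_floor_add_one _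
  have hmn : m ≤ n := by
    have h0 : invGolden * n ≤ n := by
      nlinarith [hφ1, hφ, (Nat.cast_nonneg n : (0:ℝ) ≤ n)]
    have h1 : (m:ℝ) ≤ (n:ℝ) := le_trans hm1 h0
    exact_mod_cast h1
  have hex : ∃ i, n ≤ (Nat.fib (i+1))^4 :=
    ⟨n, le_trans (n_le_fib n) (Nat.le_self_pow (by norm_num) _)⟩
  have hk1 : n ≤ Nat.fib (Nat.find hex + 1)^4 := Nat.find_spec hex
  have hkne : Nat.find hex ≠ 0 := by
    intro h0
    have hsp := Nat.find_spec hex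
    rw [h0] at hsp
    norm_num [Nat.fib_one] at hsp
    omega
  obtain ⟨j, hj⟩ : ∃ j, Nat.find hex = j + 1 := ⟨Nat.find hex - 1, by omega⟩
  have hfu : Nat.fib (j+1)^4 < n :=
    Nat.not_le.mp (Nat.find_min hex (m := j) (by omega))
  have hfl : n ≤ Nat.fib (j+2)^4 := by rw [hj] at hk1; exact hk1
  have hMeq : ((2 * n - m + 1 : ℕ) : ℤ) = 2*(n:ℤ) + 1 - m := by
    have h2 : m ≤ 2*n := by omega
    omega
  have main : ∀ x : ℤ, knorm n m x ≤ 6 * (n:ℝ)^((3:ℝ)/4) := by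
    intro x
    obtain ⟨a, b, hab, hle⟩ := key n m j x hn hm1 hm2 hmn hfu hfl
    unfold knorm
    have hmem : |(a:ℝ)| + |(b:ℝ)| * Real.sqrt n ∈ {r : ℝ | ∃ a b : ℤ,
        x ≡ a + b * m [ZMOD ((2 * n - m + 1 : ℕ) : ℤ)] ∧ r = |a| + |b| * Real.sqrt n} :=
      ⟨a, b, by rw [hMeq]; exact hab, by push_cast; ring⟩
    have hbdd : BddBelow {r : ℝ | ∃ a b : ℤ,
        x ≡ a + b * m [ZMOD ((2 * n - m + 1 : ℕ) : ℤ)] ∧ r = |a| + |b| * Real.sqrt n} := by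
      refine ⟨0, ?_⟩
      rintro r ⟨a, b, -, rfl⟩
      positivity
    exact le_trans (csInf_le hbdd hmem) hle
  refine ⟨fun x _ _ => main x, ?_⟩
  unfold lmax
  apply Real.sSup_le
  · rintro r ⟨ω, -, -, rfl⟩
    exact main ω
  · positivity
end

section
/- For every coin sequence, every starting position i ∈ {1,…,n} and every t ∈ ℕ, the position i_t of card i after t steps of the overlapping cycles shuffle satisfies p(i_t) ≡ p(i) + t + (T_S(i) − H_S(i)) + (T_B(i) − m·H_B(i)) (mod 2n−m+1). -/
open scoped Classical

/-- One step of the overlapping cycles shuffle acting on positions `1,…,n`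
    (`coin = true` means Heads). -/
def ocsStep (n m x : ℕ) (coin : Bool) : ℕ :=
  if x < m then x + 1
  else if x = m then (if coin then 1 else m + 1)
  else if x < n then (if coin then x else x + 1)
  else if coin then x else 1

/-- Position after `t` steps of the card initially at position `i`,
    using coin sequence `c` (0-indexed: step `r+1` uses coin `c r`). -/
def ocsPos (n m : ℕ) (c : ℕ → Bool) (i : ℕ) : ℕ → ℕ
  | 0 => i
  | t + 1 => ocsStep n m (ocsPos n m c i t) (c t)
/-- `p(x) = x` for `x ≤ m` and `p(x) = 2x − m` for `x > m`. -/
def pval (m x : ℕ) : ℤ := if x ≤ m then (x : ℤ) else 2 * x - m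
/-- Number of Heads used, among the first `t` steps, while card `i` is in position `m`. -/
def HB (n m : ℕ) (c : ℕ → Bool) (i t : ℕ) : ℕ :=
  ((Finset.range t).filter (fun r => ocsPos n m c i r = m ∧ c r = true)).card

/-- Number of Tails used, among the first `t` steps, while card `i` is in position `m`. -/
def TB (n m : ℕ) (c : ℕ → Bool) (i t : ℕ) : ℕ :=
  ((Finset.range t).filter (fun r => ocsPos n m c i r = m ∧ c r = false)).card

/-- Number of Heads used, among the first `t` steps, while card `i` is in the
    bottom part `{m+1,…,n}` of the deck. -/
def HS (n m : ℕ) (c : ℕ → Bool) (i t : ℕ) : ℕ :=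
  ((Finset.range t).filter (fun r =>
    m + 1 ≤ ocsPos n m c i r ∧ ocsPos n m c i r ≤ n ∧ c r = true)).card

/-- Number of Tails used, among the first `t` steps, while card `i` is in the
    bottom part `{m+1,…,n}` of the deck. -/
def TS (n m : ℕ) (c : ℕ → Bool) (i t : ℕ) : ℕ :=
  ((Finset.range t).filter (fun r =>
    m + 1 ≤ ocsPos n m c i r ∧ ocsPos n m c i r ≤ n ∧ c r = false)).card

lemma ocsPos_bounds (n m : ℕ) (hm : 2 ≤ m) (hmn : m ≤ n - 1)
    (c : ℕ → Bool) (i : ℕ) (hi : 1 ≤ i) (hin : i ≤ n) (t : ℕ) :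
    1 ≤ ocsPos n m c i t ∧ ocsPos n m c i t ≤ n := by
  induction t with
  | zero => exact ⟨hi, hin⟩
  | succ t ih =>
    obtain ⟨h1, h2⟩ := ih
    simp only [ocsPos, ocsStep]
    split_ifs <;> omega

lemma HB_succ (n m : ℕ) (c : ℕ → Bool) (i t : ℕ) :
    HB n m c i (t + 1) = HB n m c i t +
      (if ocsPos n m c i t = m ∧ c t = true then 1 else 0) := by
  unfold HB
  rw [Finset.range_add_one, Finset.filter_insert]
  split_ifs with h
  · rw [Finset.card_insert_of_notMem (by simp)]
  · rfl

lemma TB_succ (n m : ℕ) (c : ℕ → Bool) (i t : ℕ) :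
    TB n m c i (t + 1) = TB n m c i t +
      (if ocsPos n m c i t = m ∧ c t = false then 1 else 0) := by
  unfold TB
  rw [Finset.range_add_one, Finset.filter_insert]
  split_ifs with h
  · rw [Finset.card_insert_of_notMem (by simp)]
  · rfl

lemma HS_succ (n m : ℕ) (c : ℕ → Bool) (i t : ℕ) :
    HS n m c i (t + 1) = HS n m c i t +
      (if m + 1 ≤ ocsPos n m c i t ∧ ocsPos n m c i t ≤ n ∧ c t = true then 1 else 0) := by
  unfold HS
  rw [Finset.range_add_one, Finset.filter_insert]
  split_ifs with h
  · rw [Finset.card_insert_of_notMem (by simp)]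
  · rfl

lemma TS_succ (n m : ℕ) (c : ℕ → Bool) (i t : ℕ) :
    TS n m c i (t + 1) = TS n m c i t +
      (if m + 1 ≤ ocsPos n m c i t ∧ ocsPos n m c i t ≤ n ∧ c t = false then 1 else 0) := by
  unfold TS
  rw [Finset.range_add_one, Finset.filter_insert]
  split_ifs with h
  · rw [Finset.card_insert_of_notMem (by simp)]
  · rfl

lemma finish_step {N a b a' b' d : ℤ} (h : a ≡ b [ZMOD N])
    (h1 : a' = a + d) (h2 : b' = b + d) : a' ≡ b' [ZMOD N] := by
  subst h1; subst h2; exact h.add_right d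

lemma finish_step' {N a b a' b' d : ℤ} (h : a ≡ b [ZMOD N])
    (h1 : a' + N = a + d) (h2 : b' = b + d) : a' ≡ b' [ZMOD N] := by
  have h3 : a' ≡ a + d [ZMOD N] := by
    rw [Int.modEq_iff_dvd]
    exact ⟨1, by omega⟩
  exact h3.trans (h2 ▸ h.add_right d)

/-- For every coin sequence, starting position `i ∈ {1,…,n}` and
`t ∈ ℕ`, `p(i_t) ≡ p(i) + t + (T_S(i) − H_S(i)) + (T_B(i) − m·H_B(i)) (mod 2n−m+1)`. -/
theorem card_movement (n m : ℕ) (hm : 2 ≤ m) (hmn : m ≤ n - 1)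
    (c : ℕ → Bool) (i : ℕ) (hi : 1 ≤ i) (hin : i ≤ n) (t : ℕ) :
    pval m (ocsPos n m c i t) ≡
      pval m i + (t : ℤ) + ((TS n m c i t : ℤ) - (HS n m c i t : ℤ))
        + ((TB n m c i t : ℤ) - (m : ℤ) * (HB n m c i t : ℤ))
      [ZMOD ((2 * n - m + 1 : ℕ) : ℤ)] := by
  induction t with
  | zero => simp [ocsPos, HB, TB, HS, TS]
  | succ t ih =>
    obtain ⟨hx1, hxn⟩ := ocsPos_bounds n m hm hmn c i hi hin t
    have hn : 3 ≤ n := by omega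
    rw [HB_succ, TB_succ, HS_succ, TS_succ]
    simp only [ocsPos]
    set x := ocsPos n m c i t with hx
    rcases Nat.lt_trichotomy x m with h1 | h1 | h1
    · -- x < m : moves to x + 1
      have hs : ocsStep n m x (c t) = x + 1 := by simp [ocsStep, h1]
      rw [hs, if_neg (fun h => by omega : ¬(x = m ∧ c t = true)),
        if_neg (fun h => by omega : ¬(x = m ∧ c t = false)),
        if_neg (fun h => by omega : ¬(m + 1 ≤ x ∧ x ≤ n ∧ c t = true)),
        if_neg (fun h => by omega : ¬(m + 1 ≤ x ∧ x ≤ n ∧ c t = false))]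
      refine finish_step (d := 1) ih ?_ (by push_cast; ring)
      unfold pval; split_ifs <;> push_cast <;> omega
    · -- x = m
      cases hc : c t with
      | true =>
        have hs : ocsStep n m x true = 1 := by simp [ocsStep, h1]
        rw [hs,
          if_neg (fun h => absurd h.2.2 (by simp) : ¬(m + 1 ≤ x ∧ x ≤ n ∧ true = false)),
          if_neg (fun h => absurd h.1 (by omega) : ¬(m + 1 ≤ x ∧ x ≤ n ∧ true = true)),
          if_neg (fun h => absurd h.2 (by simp) : ¬(x = m ∧ true = false)),
          if_pos (show x = m ∧ true = true from ⟨h1, rfl⟩)]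
        refine finish_step (d := 1 - m) ih ?_ (by push_cast; ring)
        unfold pval; split_ifs <;> push_cast <;> omega
      | false =>
        have hs : ocsStep n m x false = m + 1 := by simp [ocsStep, h1]
        rw [hs,
          if_neg (fun h => absurd h.1 (by omega) : ¬(m + 1 ≤ x ∧ x ≤ n ∧ false = false)),
          if_neg (fun h => absurd h.2.2 (by simp) : ¬(m + 1 ≤ x ∧ x ≤ n ∧ false = true)),
          if_pos (show x = m ∧ false = false from ⟨h1, rfl⟩),
          if_neg (fun h => absurd h.2 (by simp) : ¬(x = m ∧ false = true))]
        refine finish_step (d := 2) ih ?_ (by push_cast; ring)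
        unfold pval; split_ifs <;> push_cast <;> omega
    · -- m < x : bottom part
      rcases eq_or_lt_of_le hxn with h2 | h2
      · -- x = n
        cases hc : c t with
        | true =>
          have hs : ocsStep n m x true = x := by
            unfold ocsStep
            rw [if_neg (by omega), if_neg (by omega), if_neg (by omega)]
            rfl
          rw [hs,
            if_neg (fun h => absurd h.2.2 (by simp) : ¬(m + 1 ≤ x ∧ x ≤ n ∧ true = false)),
            if_pos (show m + 1 ≤ x ∧ x ≤ n ∧ true = true from ⟨by omega, hxn, rfl⟩),
            if_neg (fun h => absurd h.2 (by simp) : ¬(x = m ∧ true = false)),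
            if_neg (fun h => absurd h.1 (by omega) : ¬(x = m ∧ true = true))]
          exact finish_step (d := 0) ih (by ring) (by push_cast; ring)
        | false =>
          have hs : ocsStep n m x false = 1 := by
            unfold ocsStep
            rw [if_neg (by omega), if_neg (by omega), if_neg (by omega)]
            rfl
          rw [hs,
            if_pos (show m + 1 ≤ x ∧ x ≤ n ∧ false = false from ⟨by omega, hxn, rfl⟩),
            if_neg (fun h => absurd h.2.2 (by simp) : ¬(m + 1 ≤ x ∧ x ≤ n ∧ false = true)),
            if_neg (fun h => absurd h.1 (by omega) : ¬(x = m ∧ false = false)),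
            if_neg (fun h => absurd h.2 (by simp) : ¬(x = m ∧ false = true))]
          refine finish_step' (d := 2) ih ?_ (by push_cast; ring)
          unfold pval; split_ifs <;> push_cast <;> omega
      · -- m < x < n
        cases hc : c t with
        | true =>
          have hs : ocsStep n m x true = x := by
            unfold ocsStep
            rw [if_neg (by omega), if_neg (by omega), if_pos h2]
            rfl
          rw [hs,
            if_neg (fun h => absurd h.2.2 (by simp) : ¬(m + 1 ≤ x ∧ x ≤ n ∧ true = false)),
            if_pos (show m + 1 ≤ x ∧ x ≤ n ∧ true = true from ⟨by omega, hxn, rfl⟩),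
            if_neg (fun h => absurd h.2 (by simp) : ¬(x = m ∧ true = false)),
            if_neg (fun h => absurd h.1 (by omega) : ¬(x = m ∧ true = true))]
          exact finish_step (d := 0) ih (by ring) (by push_cast; ring)
        | false =>
          have hs : ocsStep n m x false = x + 1 := by
            unfold ocsStep
            rw [if_neg (by omega), if_neg (by omega), if_pos h2]
            rfl
          rw [hs,
            if_pos (show m + 1 ≤ x ∧ x ≤ n ∧ false = false from ⟨by omega, hxn, rfl⟩),
            if_neg (fun h => absurd h.2.2 (by simp) : ¬(m + 1 ≤ x ∧ x ≤ n ∧ false = true)),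
            if_neg (fun h => absurd h.1 (by omega) : ¬(x = m ∧ false = false)),
            if_neg (fun h => absurd h.2 (by simp) : ¬(x = m ∧ false = true))]
          refine finish_step (d := 2) ih ?_ (by push_cast; ring)
          unfold pval; split_ifs <;> push_cast <;> omega
end

section
/- For every coin sequence, any two starting positions i, j ∈ {1,…,n} and every t ∈ ℕ, with both cards evolving under the same sequence of shuffle steps, one has p(j_t) − p(i_t) ≡ p(j) − p(i) + (T_S(j) − H_S(j)) − (T_S(i) − H_S(i)) + (T_B(j) − T_B(i)) − m·(H_B(j) − H_B(i)) (mod 2n−m+1). -/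
open scoped Classical

private lemma modeq_of_eq {N a b : ℤ} (h : a = b) : a ≡ b [ZMOD N] := h ▸ Int.ModEq.refl a

lemma ocs_pos_bounds (n m : ℕ) (hm : 1 ≤ m) (hmn : m + 1 ≤ n)
    (c : ℕ → Bool) (i : ℕ) (hi : 1 ≤ i) (hin : i ≤ n) (t : ℕ) :
    1 ≤ ocsPos n m c i t ∧ ocsPos n m c i t ≤ n := by
  induction t with
  | zero => exact ⟨hi, hin⟩
  | succ t ih =>
    obtain ⟨h1, h2⟩ := ih
    have e : ocsPos n m c i (t + 1) = ocsStep n m (ocsPos n m c i t) (c t) := rfl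
    rw [e]
    unfold ocsStep
    split_ifs <;> omega

lemma count_succ (P : ℕ → Prop) [DecidablePred P] (t : ℕ) :
    ((Finset.range (t+1)).filter P).card
      = ((Finset.range t).filter P).card + if P t then 1 else 0 := by
  rw [Finset.range_add_one, Finset.filter_insert]
  split_ifs with h
  · rw [Finset.card_insert_of_notMem (by simp)]
  · simp

lemma ocs_step_delta (n m x : ℕ) (hm : 2 ≤ m) (hmn : m + 1 ≤ n)
    (hx1 : 1 ≤ x) (hx2 : x ≤ n) (b : Bool) :
    pval m (ocsStep n m x b) ≡ pval m x + 1
      + ((if m + 1 ≤ x ∧ x ≤ n ∧ b = false then (1:ℤ) else 0)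
          - (if m + 1 ≤ x ∧ x ≤ n ∧ b = true then (1:ℤ) else 0))
      + (if x = m ∧ b = false then (1:ℤ) else 0)
      - (m : ℤ) * (if x = m ∧ b = true then (1:ℤ) else 0)
      [ZMOD ((2 * n - m + 1 : ℕ) : ℤ)] := by
  rcases lt_trichotomy x m with h | h | h
  · -- x < m : step to x+1
    have e : ocsStep n m x b = x + 1 := by unfold ocsStep; rw [if_pos h]
    have e1 : pval m (x + 1) = ((x : ℤ) + 1) := by
      rw [pval, if_pos (by omega)]; push_cast; ring
    have e2 : pval m x = (x : ℤ) := by rw [pval, if_pos (by omega)]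
    rw [e, e1, e2,
      if_neg (by rintro ⟨h', -⟩; omega), if_neg (by rintro ⟨h', -⟩; omega),
      if_neg (by rintro ⟨h', -⟩; omega), if_neg (by rintro ⟨h', -⟩; omega)]
    exact modeq_of_eq (by ring)
  · -- x = m
    have e2 : pval m x = (m : ℤ) := by rw [pval, if_pos (by omega), h]
    cases b with
    | true =>
      have e : ocsStep n m x true = 1 := by
        unfold ocsStep; rw [if_neg (by omega), if_pos h, if_pos rfl]
      have e1 : pval m 1 = 1 := by rw [pval, if_pos (by omega)]; norm_num
      rw [e, e1, e2,
        if_neg (by rintro ⟨h', -⟩; omega), if_neg (by rintro ⟨h', -⟩; omega),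
        if_neg (by rintro ⟨-, h'⟩; exact Bool.true_eq_false.mp h'),
        if_pos ⟨h, rfl⟩]
      exact modeq_of_eq (by ring)
    | false =>
      have e : ocsStep n m x false = m + 1 := by
        unfold ocsStep; rw [if_neg (by omega), if_pos h, if_neg Bool.false_ne_true]
      have e1 : pval m (m + 1) = ((m : ℤ) + 2) := by
        rw [pval, if_neg (by omega)]; push_cast; ring
      rw [e, e1, e2,
        if_neg (by rintro ⟨h', -⟩; omega), if_neg (by rintro ⟨h', -⟩; omega),
        if_pos ⟨h, rfl⟩,
        if_neg (by rintro ⟨-, h'⟩; exact Bool.false_ne_true h')]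
      exact modeq_of_eq (by ring)
  · -- m < x
    have e2 : pval m x = 2 * (x : ℤ) - m := by rw [pval, if_neg (by omega)]
    have hxm2 : x ≠ m := by omega
    rcases eq_or_lt_of_le hx2 with hxn | hxn
    · -- x = n
      cases b with
      | true =>
        have e : ocsStep n m x true = x := by
          unfold ocsStep; rw [if_neg (by omega), if_neg hxm2, if_neg (by omega), if_pos rfl]
        rw [e, e2,
          if_neg (by rintro ⟨-, -, h'⟩; exact Bool.true_eq_false.mp h'),
          if_pos ⟨by omega, hx2, rfl⟩,
          if_neg (by rintro ⟨h', -⟩; omega), if_neg (by rintro ⟨h', -⟩; omega)]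
        exact modeq_of_eq (by ring)
      | false =>
        have e : ocsStep n m x false = 1 := by
          unfold ocsStep; rw [if_neg (by omega), if_neg hxm2, if_neg (by omega),
            if_neg Bool.false_ne_true]
        have e1 : pval m 1 = 1 := by rw [pval, if_pos (by omega)]; norm_num
        rw [e, e1, e2,
          if_pos ⟨by omega, hx2, rfl⟩,
          if_neg (by rintro ⟨-, -, h'⟩; exact Bool.false_ne_true h'),
          if_neg (by rintro ⟨h', -⟩; omega), if_neg (by rintro ⟨h', -⟩; omega)]
        refine Int.modEq_iff_dvd.mpr ⟨1, ?_⟩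
        push_cast [Nat.cast_sub (show m ≤ 2 * n by omega)]
        omega
    · -- m < x < n
      cases b with
      | true =>
        have e : ocsStep n m x true = x := by
          unfold ocsStep; rw [if_neg (by omega), if_neg hxm2, if_pos hxn, if_pos rfl]
        rw [e, e2,
          if_neg (by rintro ⟨-, -, h'⟩; exact Bool.true_eq_false.mp h'),
          if_pos ⟨by omega, hx2, rfl⟩,
          if_neg (by rintro ⟨h', -⟩; omega), if_neg (by rintro ⟨h', -⟩; omega)]
        exact modeq_of_eq (by ring)
      | false =>
        have e : ocsStep n m x false = x + 1 := by
          unfold ocsStep; rw [if_neg (by omega), if_neg hxm2, if_pos hxn,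
            if_neg Bool.false_ne_true]
        have e1 : pval m (x + 1) = 2 * (x : ℤ) + 2 - m := by
          rw [pval, if_neg (by omega)]; push_cast; ring
        rw [e, e1, e2,
          if_pos ⟨by omega, hx2, rfl⟩,
          if_neg (by rintro ⟨-, -, h'⟩; exact Bool.false_ne_true h'),
          if_neg (by rintro ⟨h', -⟩; omega), if_neg (by rintro ⟨h', -⟩; omega)]
        exact modeq_of_eq (by ring)

lemma ocs_single (n m : ℕ) (hm : 2 ≤ m) (hmn : m + 1 ≤ n)
    (c : ℕ → Bool) (i : ℕ) (hi : 1 ≤ i) (hin : i ≤ n) (t : ℕ) :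
    pval m (ocsPos n m c i t) ≡
      pval m i + t + ((TS n m c i t : ℤ) - (HS n m c i t : ℤ))
        + (TB n m c i t : ℤ) - (m : ℤ) * (HB n m c i t : ℤ)
      [ZMOD ((2 * n - m + 1 : ℕ) : ℤ)] := by
  induction t with
  | zero => simp [ocsPos, TS, HS, TB, HB]
  | succ t ih =>
    obtain ⟨hx1, hx2⟩ := ocs_pos_bounds n m (by omega) hmn c i hi hin t
    have hTS : (TS n m c i (t+1) : ℤ) = TS n m c i t
        + if m + 1 ≤ ocsPos n m c i t ∧ ocsPos n m c i t ≤ n ∧ c t = false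
          then 1 else 0 := by
      rw [show TS n m c i (t+1)
          = TS n m c i t + if m + 1 ≤ ocsPos n m c i t ∧ ocsPos n m c i t ≤ n ∧ c t = false
              then 1 else 0 from count_succ _ t]
      push_cast [apply_ite (Nat.cast : ℕ → ℤ)]
      rfl
    have hHS : (HS n m c i (t+1) : ℤ) = HS n m c i t
        + if m + 1 ≤ ocsPos n m c i t ∧ ocsPos n m c i t ≤ n ∧ c t = true
          then 1 else 0 := by
      rw [show HS n m c i (t+1)
          = HS n m c i t + if m + 1 ≤ ocsPos n m c i t ∧ ocsPos n m c i t ≤ n ∧ c t = true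
              then 1 else 0 from count_succ _ t]
      push_cast [apply_ite (Nat.cast : ℕ → ℤ)]
      rfl
    have hTB : (TB n m c i (t+1) : ℤ) = TB n m c i t
        + if ocsPos n m c i t = m ∧ c t = false then 1 else 0 := by
      rw [show TB n m c i (t+1)
          = TB n m c i t + if ocsPos n m c i t = m ∧ c t = false then 1 else 0
          from count_succ _ t]
      push_cast [apply_ite (Nat.cast : ℕ → ℤ)]
      rfl
    have hHB : (HB n m c i (t+1) : ℤ) = HB n m c i t
        + if ocsPos n m c i t = m ∧ c t = true then 1 else 0 := by
      rw [show HB n m c i (t+1)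
          = HB n m c i t + if ocsPos n m c i t = m ∧ c t = true then 1 else 0
          from count_succ _ t]
      push_cast [apply_ite (Nat.cast : ℕ → ℤ)]
      rfl
    have e : ocsPos n m c i (t + 1) = ocsStep n m (ocsPos n m c i t) (c t) := rfl
    have hstep := ocs_step_delta n m (ocsPos n m c i t) hm hmn hx1 hx2 (c t)
    rw [e, hTS, hHS, hTB, hHB]
    obtain ⟨k1, hk1⟩ := Int.modEq_iff_dvd.mp ih
    obtain ⟨k2, hk2⟩ := Int.modEq_iff_dvd.mp hstep
    refine Int.modEq_iff_dvd.mpr ⟨k1 + k2, ?_⟩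
    push_cast at hk1 hk2 ⊢
    linear_combination hk1 + hk2
/-- For every coin sequence and any two starting positions
`i, j ∈ {1,…,n}` evolving under the same steps,
`p(j_t) − p(i_t) ≡ p(j) − p(i) + (T_S(j) − H_S(j)) − (T_S(i) − H_S(i))
  + (T_B(j) − T_B(i)) − m·(H_B(j) − H_B(i)) (mod 2n−m+1)`. -/
theorem card_movement_compare (n m : ℕ) (hm : 2 ≤ m) (hmn : m ≤ n - 1)
    (c : ℕ → Bool) (i j : ℕ) (hi : 1 ≤ i) (hin : i ≤ n)
    (hj : 1 ≤ j) (hjn : j ≤ n) (t : ℕ) :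
    pval m (ocsPos n m c j t) - pval m (ocsPos n m c i t) ≡
      pval m j - pval m i
        + (((TS n m c j t : ℤ) - (HS n m c j t : ℤ))
            - ((TS n m c i t : ℤ) - (HS n m c i t : ℤ)))
        + ((TB n m c j t : ℤ) - (TB n m c i t : ℤ))
        - (m : ℤ) * ((HB n m c j t : ℤ) - (HB n m c i t : ℤ))
      [ZMOD ((2 * n - m + 1 : ℕ) : ℤ)] := by
  have hmn' : m + 1 ≤ n := by omega
  have hI := ocs_single n m hm hmn' c i hi hin t
  have hJ := ocs_single n m hm hmn' c j hj hjn t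
  have := hJ.sub hI
  calc pval m (ocsPos n m c j t) - pval m (ocsPos n m c i t)
      ≡ _ [ZMOD ((2 * n - m + 1 : ℕ) : ℤ)] := this
    _ = _ := by ring
end

section
/- For all positions j, k ∈ {1,…,n}, one has p(k) − p(j) ≡ p(σ(j)) − p(σ(k)) (mod 2n−m+1). -/
open scoped Classical

/-- `σ(j) = m+1−j` for `j ≤ m` and `σ(j) = n+m+1−j` for `j > m`. -/
def sigmaOCS (n m j : ℕ) : ℕ := if j ≤ m then m + 1 - j else n + m + 1 - j

/-- For all positions `j, k ∈ {1,…,n}`,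
`p(k) − p(j) ≡ p(σ(j)) − p(σ(k)) (mod 2n−m+1)`. -/
theorem inverse_dist (n m : ℕ) (hm : 2 ≤ m) (hmn : m ≤ n - 1)
    (j k : ℕ) (hj : 1 ≤ j) (hjn : j ≤ n) (hk : 1 ≤ k) (hkn : k ≤ n) :
    pval m k - pval m j ≡ pval m (sigmaOCS n m j) - pval m (sigmaOCS n m k)
      [ZMOD ((2 * n - m + 1 : ℕ) : ℤ)] := by
  have h : (pval m (sigmaOCS n m j) - pval m (sigmaOCS n m k)) - (pval m k - pval m j) = 0
      ∨ (pval m (sigmaOCS n m j) - pval m (sigmaOCS n m k)) - (pval m k - pval m j)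
        = ((2 * n - m + 1 : ℕ) : ℤ)
      ∨ (pval m (sigmaOCS n m j) - pval m (sigmaOCS n m k)) - (pval m k - pval m j)
        = -((2 * n - m + 1 : ℕ) : ℤ) := by
    simp only [pval, sigmaOCS]
    split_ifs <;> omega
  refine Int.modEq_iff_dvd.mpr ?_
  rcases h with h | h | h
  · exact ⟨0, by linarith⟩
  · exact ⟨1, by linarith⟩
  · exact ⟨-1, by linarith⟩
end

section
/- For all positions j, k ∈ {1,…,n}, one has |p(k) − p(j)|_M = |p(σ(k)) − p(σ(j))|_M and ‖p(k) − p(j)‖ = ‖p(σ(k)) − p(σ(j))‖. -/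
open scoped Classical

/-- `|z|_M = min { |a| : a ∈ ℤ, z ≡ a (mod 2n−m+1) }`. -/
noncomputable def Mdist (n m : ℕ) (z : ℤ) : ℝ :=
  sInf {r : ℝ | ∃ a : ℤ, z ≡ a [ZMOD ((2 * n - m + 1 : ℕ) : ℤ)] ∧ r = |a|}
lemma Mdist_neg (n m : ℕ) (z w : ℤ)
    (h : w ≡ -z [ZMOD ((2 * n - m + 1 : ℕ) : ℤ)]) : Mdist n m z = Mdist n m w := by
  unfold Mdist
  congr 1
  ext r
  constructor
  · rintro ⟨a, ha, rfl⟩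
    exact ⟨-a, h.trans ha.neg, by rw [abs_neg]⟩
  · rintro ⟨a, ha, rfl⟩
    refine ⟨-a, ?_, by rw [abs_neg]⟩
    have := (h.symm.trans ha).neg
    simpa using this
lemma knorm_neg (n m : ℕ) (z w : ℤ)
    (h : w ≡ -z [ZMOD ((2 * n - m + 1 : ℕ) : ℤ)]) : knorm n m z = knorm n m w := by
  unfold knorm
  congr 1
  ext r
  constructor
  · rintro ⟨a, b, ha, rfl⟩
    refine ⟨-a, -b, ?_, by rw [abs_neg, abs_neg]⟩
    have e : -a + -b * (m : ℤ) = -(a + b * m) := by ring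
    rw [e]
    exact h.trans ha.neg
  · rintro ⟨a, b, ha, rfl⟩
    refine ⟨-a, -b, ?_, by rw [abs_neg, abs_neg]⟩
    have e : -a + -b * (m : ℤ) = -(a + b * m) := by ring
    rw [e]
    simpa using (h.symm.trans ha).neg

lemma pval_sigma (n m x : ℕ) (hmn : m + 1 ≤ n) (hx : 1 ≤ x) (hxn : x ≤ n) :
    pval m (sigmaOCS n m x) ≡ (m : ℤ) + 1 - pval m x [ZMOD ((2 * n - m + 1 : ℕ) : ℤ)] := by
  unfold pval sigmaOCS
  rcases le_or_gt x m with h | h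
  · have h1 : m + 1 - x ≤ m := by omega
    simp only [if_pos h, if_pos h1]
    have : ((m + 1 - x : ℕ) : ℤ) = (m : ℤ) + 1 - x := by omega
    rw [this]
  · have h1 : ¬ x ≤ m := by omega
    have h2 : ¬ n + m + 1 - x ≤ m := by omega
    simp only [if_neg h1, if_neg h2]
    have hle : x ≤ n + m + 1 := by omega
    have e1 : ((n + m + 1 - x : ℕ) : ℤ) = (n : ℤ) + m + 1 - x := by
      rw [Nat.cast_sub hle]; push_cast; ring
    refine (Int.modEq_iff_dvd.mpr ⟨-1, ?_⟩)
    rw [e1]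
    have e2 : ((2 * n - m + 1 : ℕ) : ℤ) = 2 * (n : ℤ) - m + 1 := by
      rw [Nat.add_comm, Nat.cast_add, Nat.cast_sub (by omega : m ≤ 2 * n)]
      push_cast; ring
    rw [e2]
    ring

/-- For all positions `j, k ∈ {1,…,n}`,
`|p(k) − p(j)|_M = |p(σ(k)) − p(σ(j))|_M` and `‖p(k) − p(j)‖ = ‖p(σ(k)) − p(σ(j))‖`. -/
theorem inverse_norm (n m : ℕ) (hm : 2 ≤ m) (hmn : m ≤ n - 1)
    (j k : ℕ) (hj : 1 ≤ j) (hjn : j ≤ n) (hk : 1 ≤ k) (hkn : k ≤ n) :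
    Mdist n m (pval m k - pval m j)
      = Mdist n m (pval m (sigmaOCS n m k) - pval m (sigmaOCS n m j)) ∧
    knorm n m (pval m k - pval m j)
      = knorm n m (pval m (sigmaOCS n m k) - pval m (sigmaOCS n m j)) := by
  have hn : m + 1 ≤ n := by omega
  have hkey : pval m (sigmaOCS n m k) - pval m (sigmaOCS n m j)
      ≡ -(pval m k - pval m j) [ZMOD ((2 * n - m + 1 : ℕ) : ℤ)] := by
    have h1 := pval_sigma n m k hn hk hkn
    have h2 := pval_sigma n m j hn hj hjn
    have := h1.sub h2
    calc pval m (sigmaOCS n m k) - pval m (sigmaOCS n m j)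
        ≡ ((m : ℤ) + 1 - pval m k) - ((m : ℤ) + 1 - pval m j)
          [ZMOD ((2 * n - m + 1 : ℕ) : ℤ)] := this
      _ = -(pval m k - pval m j) := by ring
  exact ⟨Mdist_neg n m _ _ hkey, knorm_neg n m _ _ hkey⟩
end

section
/- For all natural numbers n, m with 1 ≤ m < n and every s ∈ ℕ, there exists an integer t with s ≤ t ≤ s + 4n such that −t + ⌊t/(2n)⌋·(m−1) ≡ 0 (mod 2n−m+1). -/
open scoped Classical


/-- For all `n, m` with `1 ≤ m < n` and every `s`, there is
`t ∈ [s, s+4n]` with `−t + ⌊t/(2n)⌋·(m−1) ≡ 0 (mod 2n−m+1)`. -/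
theorem exists_good_time (n m : ℕ) (hm : 1 ≤ m) (hmn : m < n) (s : ℕ) :
    ∃ t : ℕ, s ≤ t ∧ t ≤ s + 4 * n ∧
      -(t : ℤ) + ((t / (2 * n) : ℕ) : ℤ) * ((m : ℤ) - 1) ≡ 0
        [ZMOD ((2 * n - m + 1 : ℕ) : ℤ)] := by
  have hn : 0 < 2 * n := by omega
  set q : ℕ := s / (2 * n) + 1 with hq
  refine ⟨2 * n * q, ?_, ?_, ?_⟩
  · exact (Nat.lt_mul_div_succ s hn).le
  · have h2 : 2 * n * (s / (2 * n)) ≤ s := Nat.mul_div_le s (2 * n)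
    have : 2 * n * q = 2 * n * (s / (2 * n)) + 2 * n := by ring
    omega
  · have hdiv : (2 * n * q) / (2 * n) = q := Nat.mul_div_cancel_left q hn
    rw [hdiv]
    have hcast : ((2 * n - m + 1 : ℕ) : ℤ) = 2 * (n : ℤ) - m + 1 := by
      push_cast [Nat.sub_add_cancel]; omega
    rw [Int.ModEq]
    have : -((2 * n * q : ℕ) : ℤ) + (q : ℤ) * ((m : ℤ) - 1)
        = ((2 * n - m + 1 : ℕ) : ℤ) * (-(q : ℤ)) := by
      rw [hcast]; push_cast; ring
    rw [this, Int.mul_emod_right, Int.zero_emod]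
end
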